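/- Assume additionally that ι (m−1) < n + m. Then the hidden features are expressed purely in terms of the observable features (Eq. (8) of the paper): (a) for every i with 1 ≤ i < ι 0, φ* i = φ i * ∏_{j : Fin m} (φ (ι j) * φ (ι j + 1)); (b) for every k with k + 1 ≤ m − 1 and every i with ι k < i < ι (k+1), φ* (i − (k+1)) = φ i * ∏_{j : Fin m, j ≥ k+1} (φ (ι j) * φ (ι j + 1)); (c) for every i with ι (m−1) < i ≤ n + m, φ* (i − m) = φ i. -/

import Mathlib

/-!
Every factor `2 * b k - 1` is `±1`, so `φ (ι j) * φ (ι j + 1) = 2 * b (ι j) - 1`, and multiplying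
`φ i` by these ghost factors cancels exactly the ghost positions in `[i, n + m]`. The remaining
positions `k` are mapped by `k ↦ k - #{ghosts below k}` increasingly onto
`[i - #{ghosts below i}, n]`, and the interface says that `c` at the image of `k` is `b k`;
so what is left is a hidden feature.
-/

open Finset

theorem sub_card_filter_lt_le {G : Finset ℕ} {N i : ℕ} (hG : ∀ x ∈ G, x ≤ N) (hiG : i ∉ G)
    (hiN : i ≤ N) : i - #{x ∈ G | x < i} ≤ N - #G := by
  have hsplit := card_filter_add_card_filter_not (s := G) (p := (· < i))
  have habove : {x ∈ G | ¬x < i} ⊆ Ioc i N := fun x hx => by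
    simp only [mem_filter, not_lt] at hx
    exact mem_Ioc.2 ⟨lt_of_le_of_ne hx.2 (fun h => hiG (h ▸ hx.1)), hG x hx.1⟩
  have := card_le_card habove
  simp only [Nat.card_Ioc] at this
  omega

section Ghosts

variable {α : Type*} [LinearOrder α] {m : ℕ} {ι : Fin m → α}

def ghostsBelow (ι : Fin m → α) (x : α) : ℕ := #{t | ι t < x}

theorem ghostsBelow_le (x : α) : ghostsBelow ι x ≤ m :=
  (card_filter_le _ _).trans_eq (card_fin m)

theorem lt_ghostsBelow_iff (hι : Monotone ι) (t : Fin m) (x : α) :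
    (t : ℕ) < ghostsBelow ι x ↔ ι t < x := by
  constructor
  · intro ht
    by_contra! hx
    have hsub : ({s | ι s < x} : Finset (Fin m)) ⊆ Iio t := fun s hs => by
      simp only [mem_filter, mem_univ, true_and] at hs
      exact mem_Iio.2 (lt_of_not_ge fun hts => (hx.trans (hι hts)).not_gt hs)
    have := card_le_card hsub
    rw [Fin.card_Iio] at this
    exact lt_irrefl _ (ht.trans_le this)
  · intro ht
    have hsub : Iic t ⊆ ({s | ι s < x} : Finset (Fin m)) := fun s hs =>
      mem_filter.2 ⟨mem_univ s, (hι (mem_Iic.1 hs)).trans_lt ht⟩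
    have := card_le_card hsub
    rw [Fin.card_Iic] at this
    exact this

theorem ghostsBelow_le_iff (hι : Monotone ι) (t : Fin m) (x : α) :
    ghostsBelow ι x ≤ t ↔ x ≤ ι t := by
  simpa only [not_lt] using (lt_ghostsBelow_iff hι t x).not

theorem ghostsBelow_eq_zero (hι : Monotone ι) (hm : 0 < m) {x : α} (hx : x ≤ ι ⟨0, hm⟩) :
    ghostsBelow ι x = 0 :=
  Nat.eq_zero_of_not_pos ((lt_ghostsBelow_iff hι ⟨0, hm⟩ x).not.2 hx.not_gt)

theorem ghostsBelow_eq_of_lt_of_le (hι : Monotone ι) {k : ℕ} (hk : k + 1 < m) {x : α}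
    (hkx : ι ⟨k, by omega⟩ < x) (hxk : x ≤ ι ⟨k + 1, hk⟩) : ghostsBelow ι x = k + 1 := by
  have hlo := (lt_ghostsBelow_iff hι ⟨k, by omega⟩ x).2 hkx
  have hhi := (lt_ghostsBelow_iff hι ⟨k + 1, hk⟩ x).not.2 hxk.not_gt
  simp only at hlo hhi
  omega

theorem ghostsBelow_eq_card (hι : Monotone ι) (hm : 0 < m) {x : α}
    (hx : ι ⟨m - 1, by omega⟩ < x) : ghostsBelow ι x = m := by
  have hlo := (lt_ghostsBelow_iff hι ⟨m - 1, by omega⟩ x).2 hx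
  have hhi := ghostsBelow_le (ι := ι) x
  simp only at hlo
  omega

theorem ghostsBelow_eq_card_filter_image [DecidableEq α] (hι : Function.Injective ι) (x : α) :
    ghostsBelow ι x = #{y ∈ univ.image ι | y < x} := by
  rw [filter_image, card_image_of_injective _ hι]
  rfl

end Ghosts

section CommMonoid

variable {M : Type*} [CommMonoid M]

theorem prod_Icc_mul_prod_Icc_add_one {a b : ℕ} (h : a ≤ b) {f : ℕ → M}
    (hf : ∀ k, f k * f k = 1) : (∏ k ∈ Icc a b, f k) * ∏ k ∈ Icc (a + 1) b, f k = f a := by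
  rw [← mul_prod_Ioc_eq_prod_Icc h, ← Icc_add_one_left_eq_Ioc, mul_assoc, ← prod_mul_distrib,
    prod_eq_one fun k _ => hf k, mul_one]

theorem prod_mul_prod_eq_prod_sdiff {κ : Type*} [DecidableEq κ] {s t : Finset κ} (hts : t ⊆ s)
    {f : κ → M} (hf : ∀ x ∈ t, f x * f x = 1) :
    (∏ x ∈ s, f x) * ∏ x ∈ t, f x = ∏ x ∈ s \ t, f x := by
  rw [← prod_sdiff hts, mul_assoc, ← prod_mul_distrib, prod_eq_one hf, mul_one]

theorem prod_Icc_sdiff_eq_prod_Icc_sub_card {G : Finset ℕ} {n N : ℕ} (hG : ∀ x ∈ G, x ≤ N)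
    (hN : #G + n = N) {s t : ℕ → M} {i : ℕ} (hi : i ≤ N + 1)
    (hst : ∀ k ∈ Icc i N, k ∉ G → t (k - #{x ∈ G | x < k}) = s k) :
    ∏ k ∈ Icc i N \ G, s k = ∏ k ∈ Icc (i - #{x ∈ G | x < i}) n, t k := by
  induction hd : N + 1 - i generalizing i with
  | zero =>
    obtain rfl : i = N + 1 := by omega
    rw [filter_true_of_mem fun x hx => Nat.lt_succ_of_le (hG x hx), Icc_eq_empty (by omega),
      Icc_eq_empty (by omega), empty_sdiff, prod_empty, prod_empty]
  | succ d ih =>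
    have hiN : i ≤ N := by omega
    have hnext := ih (i := i + 1) (by omega)
      (fun k hk => hst k (Icc_subset_Icc_left (Nat.le_succ i) hk)) (by omega)
    rw [← insert_Icc_add_one_left_eq_Icc hiN]
    by_cases hiG : i ∈ G
    · have hcount : {x ∈ G | x < i + 1} = insert i {x ∈ G | x < i} := by
        ext x; simp only [mem_filter, mem_insert]; grind
      rw [hcount, card_insert_of_notMem (by simp), Nat.add_sub_add_right] at hnext
      rw [insert_sdiff_of_mem _ hiG, hnext]
    · have hcount : {x ∈ G | x < i + 1} = {x ∈ G | x < i} := filter_congr fun x hx => by grind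
      have hle : #{x ∈ G | x < i} ≤ i :=
        (card_le_card fun x hx => mem_range.2 (mem_filter.1 hx).2).trans_eq (card_range i)
      rw [hcount, Nat.sub_add_comm hle] at hnext
      rw [insert_sdiff_of_notMem _ hiG, prod_insert (by simp),
        ← mul_prod_Ioc_eq_prod_Icc (by have := sub_card_filter_lt_le hG hiG hiN; omega),
        ← Icc_add_one_left_eq_Ioc, hnext, hst i (by simp [hiN]) hiG]

theorem prod_Icc_sub_ghostsBelow {m n N : ℕ} {ι : Fin m → ℕ} (hι : StrictMono ι)
    (hιN : ∀ j, ι j ≤ N) (hN : m + n = N) {s t : ℕ → M} (hs : ∀ j, s (ι j) * s (ι j) = 1) {i : ℕ}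
    (hi : i ≤ N + 1) (hst : ∀ k ∈ Icc i N, k ∉ Set.range ι → t (k - ghostsBelow ι k) = s k) :
    ∏ k ∈ Icc (i - ghostsBelow ι i) n, t k =
      (∏ k ∈ Icc i N, s k) *
        ∏ j ∈ univ.filter (fun j : Fin m => ghostsBelow ι i ≤ (j : ℕ)), s (ι j) := by
  set G := univ.image ι
  have hghosts : ∏ j ∈ univ.filter (fun j : Fin m => ghostsBelow ι i ≤ (j : ℕ)), s (ι j) =
      ∏ x ∈ {x ∈ G | i ≤ x}, s x := by
    rw [filter_image, prod_image hι.injective.injOn]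
    exact prod_congr (filter_congr fun j _ => ghostsBelow_le_iff hι.monotone j i) fun _ _ => rfl
  have hsub : {x ∈ G | i ≤ x} ⊆ Icc i N := fun x hx => by
    obtain ⟨hxG, hix⟩ := mem_filter.1 hx
    obtain ⟨j, -, rfl⟩ := mem_image.1 hxG
    exact mem_Icc.2 ⟨hix, hιN j⟩
  have hsdiff : Icc i N \ {x ∈ G | i ≤ x} = Icc i N \ G := by
    ext x; simp only [mem_sdiff, mem_filter, mem_Icc]; tauto
  have hGN : ∀ x ∈ G, x ≤ N := by simpa [G] using hιN
  have hcard : #G + n = N := by rw [card_image_of_injective _ hι.injective, card_fin, hN]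
  have hstG : ∀ k ∈ Icc i N, k ∉ G → t (k - #{x ∈ G | x < k}) = s k := fun k hk hkG => by
    rw [← ghostsBelow_eq_card_filter_image hι.injective]
    exact hst k hk (by simpa [G] using hkG)
  have hghostSq : ∀ x ∈ {x ∈ G | i ≤ x}, s x * s x = 1 := fun x hx => by
    obtain ⟨j, -, rfl⟩ := mem_image.1 (mem_filter.1 hx).1
    exact hs j
  rw [hghosts, prod_mul_prod_eq_prod_sdiff hsub hghostSq, hsdiff,
    prod_Icc_sdiff_eq_prod_Icc_sub_card hGN hcard hi hstG,
    ghostsBelow_eq_card_filter_image hι.injective]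

end CommMonoid

theorem apply_sub_ghostsBelow_eq {β : Type*} {n m : ℕ} (hm : 0 < m) {ι : Fin m → ℕ}
    (hι : Monotone ι) {b c : ℕ → β}
    (hc1 : ∀ i, 1 ≤ i → i < ι ⟨0, hm⟩ → c i = b i)
    (hc2 : ∀ k (hk : k + 1 < m), ∀ i,
      ι ⟨k, by omega⟩ < i → i < ι ⟨k + 1, hk⟩ → c (i - (k + 1)) = b i)
    (hc3 : ∀ i, ι ⟨m - 1, by omega⟩ < i → i ≤ n + m → c (i - m) = b i)
    {i : ℕ} (hi : 1 ≤ i) (hin : i ≤ n + m) (hiι : i ∉ Set.range ι) :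
    c (i - ghostsBelow ι i) = b i := by
  have hne : ∀ j, ι j ≠ i := fun j h => hiι ⟨j, h⟩
  have hlt : ∀ j : Fin m, (j : ℕ) < ghostsBelow ι i ↔ ι j < i := fun j => lt_ghostsBelow_iff hι j i
  have hle := ghostsBelow_le (ι := ι) i
  by_cases h0 : ghostsBelow ι i = 0
  · have := (hlt ⟨0, hm⟩).not.1 (by simp [h0])
    rw [h0, Nat.sub_zero]
    exact hc1 i hi (lt_of_le_of_ne (not_lt.1 this) (hne _).symm)
  by_cases hm' : ghostsBelow ι i = m
  · rw [hm']
    exact hc3 i ((hlt ⟨m - 1, by omega⟩).1 (by simp only; omega)) hin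
  obtain ⟨k, hk⟩ : ∃ k, ghostsBelow ι i = k + 1 := ⟨_, (Nat.succ_pred_eq_of_ne_zero h0).symm⟩
  have hbelow := (hlt ⟨k, by omega⟩).1 (by simp only; omega)
  have habove := (hlt ⟨k + 1, by omega⟩).not.1 (by simp only; omega)
  rw [hk]
  exact hc2 k (by omega) i hbelow (lt_of_le_of_ne (not_lt.1 habove) (hne _).symm)

/-- Eq. (8) of the paper: assuming `ι (m-1) < n + m`, the hidden
features are expressed purely in terms of the observable features. -/
theorem stmt5 (n m : ℕ) (hm : 1 ≤ m)
    (ι : Fin m → ℕ) (hmono : StrictMono ι)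
    (hlast : ι ⟨m - 1, by omega⟩ < n + m)
    (b : ℕ → ℤ) (hb : ∀ k, b k = 0 ∨ b k = 1)
    (c : ℕ → ℤ)
    (hc1 : ∀ i, 1 ≤ i → i < ι ⟨0, hm⟩ → c i = b i)
    (hc2 : ∀ k (hk : k + 1 ≤ m - 1), ∀ i,
      ι ⟨k, by omega⟩ < i → i < ι ⟨k + 1, by omega⟩ → c (i - (k + 1)) = b i)
    (hc3 : ∀ i, ι ⟨m - 1, by omega⟩ < i → i ≤ n + m → c (i - m) = b i)
    (φs : ℕ → ℤ) (hφs : ∀ i, φs i = ∏ k ∈ Finset.Icc i n, (2 * c k - 1))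
    (φ : ℕ → ℤ) (hφ : ∀ i, φ i = ∏ k ∈ Finset.Icc i (n + m), (2 * b k - 1)) :
    (∀ i, 1 ≤ i → i < ι ⟨0, hm⟩ →
      φs i = φ i * ∏ j : Fin m, (φ (ι j) * φ (ι j + 1))) ∧
    (∀ k (hk : k + 1 ≤ m - 1), ∀ i,
      ι ⟨k, by omega⟩ < i → i < ι ⟨k + 1, by omega⟩ →
      φs (i - (k + 1)) = φ i *
        ∏ j ∈ Finset.univ.filter (fun j : Fin m => k + 1 ≤ (j : ℕ)),
          (φ (ι j) * φ (ι j + 1))) ∧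
    (∀ i, ι ⟨m - 1, by omega⟩ < i → i ≤ n + m → φs (i - m) = φ i) := by
  have hsign : ∀ k, (2 * b k - 1) * (2 * b k - 1) = 1 := fun k => by
    rcases hb k with h | h <;> rw [h] <;> norm_num
  have hιN : ∀ j, ι j ≤ n + m := fun j =>
    (hmono.monotone (show j ≤ ⟨m - 1, by omega⟩ from Nat.le_sub_one_of_lt j.isLt)).trans hlast.le
  have hpair : ∀ j, φ (ι j) * φ (ι j + 1) = 2 * b (ι j) - 1 := fun j => by
    rw [hφ, hφ]
    exact prod_Icc_mul_prod_Icc_add_one (hιN j) hsign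
  have hhidden : ∀ i, 1 ≤ i → i ≤ n + m + 1 → φs (i - ghostsBelow ι i) = φ i *
      ∏ j ∈ univ.filter (fun j : Fin m => ghostsBelow ι i ≤ (j : ℕ)), (φ (ι j) * φ (ι j + 1)) := by
    intro i hi hiN
    rw [hφs, hφ i]
    simp only [hpair]
    exact prod_Icc_sub_ghostsBelow hmono hιN (add_comm m n) (fun j => hsign _) hiN
      fun k hk hkι => by
        rw [apply_sub_ghostsBelow_eq hm hmono.monotone hc1
          (fun k hk => hc2 k (by omega)) hc3 (hi.trans (mem_Icc.1 hk).1)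
          (mem_Icc.1 hk).2 hkι]
  refine ⟨fun i hi1 hi2 => ?_, fun k hk i hi1 hi2 => ?_, fun i hi1 hi2 => ?_⟩
  · simpa [ghostsBelow_eq_zero hmono.monotone hm hi2.le] using
      hhidden i hi1 (by have := hιN ⟨0, hm⟩; omega)
  · have := hhidden i (by omega) (by have := hιN ⟨k + 1, by omega⟩; omega)
    rwa [ghostsBelow_eq_of_lt_of_le hmono.monotone (by omega) hi1 hi2.le] at this
  · have := hhidden i (by omega) (by omega)
    rwa [ghostsBelow_eq_card hmono.monotone hm hi1, filter_false_of_mem fun j _ => not_le.2 j.isLt,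
      prod_empty, mul_one] at this
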